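/- Lipschitz dependence of the prefix-MoE regression function on its prompt parameters: there exists a constant C₁ > 0, depending only on the fixed quantities (d, N, L', Ω, the support bound of μ, A^0_j, a^0_j, h_j, B, C), such that for any two mixing measures Ḡ = Σ_{i=1}^{L'} exp(b_i) δ_{p_i} and Ǧ = Σ_{i=1}^{L'} exp(b̌_i) δ_{p̌_i}, each with L' atoms in Ω, one has ‖f_Ḡ − f_Ǧ‖_{L²(μ)} ≤ C₁ · Σ_{i=1}^{L'} (‖p_i − p̌_i‖ + |b_i − b̌_i|). -/

import Mathlib

/-!
Statement 10: Lipschitz dependence of the prefix-MoE regression function on its prompt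
parameters: `‖f_Ḡ − f_Ǧ‖_{L²(μ)} ≤ C₁ · Σᵢ (‖pᵢ − p̌ᵢ‖ + |bᵢ − b̌ᵢ|)` for mixing measures
with `L'` atoms in `Ω`.
-/

open MeasureTheory ProbabilityTheory Real
open scoped NNReal ENNReal

noncomputable section

/-- `ℝ^d` with the Euclidean norm. -/
abbrev Vec (d : ℕ) := EuclideanSpace ℝ (Fin d)

/-- The quadratic form `X ⊤ A X`. -/
def quadForm {d : ℕ} (A : Matrix (Fin d) (Fin d) ℝ) (X : Vec d) : ℝ :=
  ∑ k, ∑ l, X k * A k l * X l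

/-- The bilinear form `(B p)ᵀ X`. -/
def bilin {d : ℕ} (B : Matrix (Fin d) (Fin d) ℝ) (p X : Vec d) : ℝ :=
  ∑ k, (∑ l, B k l * p l) * X k

/-- The product `C p` of a row vector `C` and a column vector `p`. -/
def rowMul {d : ℕ} (C p : Vec d) : ℝ := ∑ k, C k * p k

/-- The prefix-MoE regression function in the simple linear shared-structure setting,
for the mixing measure with atoms `(b i, p i)`, `i : Fin m`. -/
def moeLin {d N : ℕ} (A : Fin N → Matrix (Fin d) (Fin d) ℝ) (a : Fin N → ℝ)
    (h : Fin N → Vec d → ℝ) (B : Matrix (Fin d) (Fin d) ℝ) (C : Vec d)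
    {m : ℕ} (b : Fin m → ℝ) (p : Fin m → Vec d) (X : Vec d) : ℝ :=
  ((∑ j, Real.exp (quadForm (A j) X + a j) * h j X) +
      ∑ i, Real.exp (bilin B (p i) X + b i) * rowMul C (p i)) /
    ((∑ j, Real.exp (quadForm (A j) X + a j)) +
      ∑ i, Real.exp (bilin B (p i) X + b i))

/-!
On the support of `μ` every gating exponent `(B pᵢ)ᵀX + bᵢ` lies in `[-M₀, M₀]`, with `M₀` depending
only on `Ω` and the support radius. Hence each prompt gate `exp ((B pᵢ)ᵀX + bᵢ)` is Lipschitz in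
`(bᵢ, pᵢ)` and the prompt part of the denominator is at least `exp (-M₀)`. As `f_Ǧ(X)` is a weighted
average of the values `hⱼ(X)` and `C p̌ᵢ`, it is bounded, and the identity
`u / v - u' / v' = ((u - u') - (u' / v') (v - v')) / v` turns the Lipschitz bounds on numerator and
denominator into one on `f_Ḡ - f_Ǧ`, uniformly on the support of `μ`.
-/

theorem abs_exp_sub_exp_le {M s t : ℝ} (hs : s ≤ M) (ht : t ≤ M) :
    |exp s - exp t| ≤ exp M * |s - t| := by
  simpa using (convex_Iic M).norm_image_sub_le_of_norm_deriv_le (f := exp)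
    (fun _ _ => differentiableAt_exp) (fun x hx => by simpa using hx) ht hs

theorem abs_mul_sub_mul_le (a b a' b' : ℝ) :
    |a * b - a' * b'| ≤ |a - a'| * |b| + |a'| * |b - b'| := by
  rw [← abs_mul, ← abs_mul, show a * b - a' * b' = (a - a') * b + a' * (b - b') by ring]
  exact abs_add_le _ _

theorem abs_sum_sub_sum_le {ι : Type*} (s : Finset ι) {f g r : ι → ℝ} {L : ℝ}
    (h : ∀ i ∈ s, |f i - g i| ≤ L * r i) :
    |∑ i ∈ s, f i - ∑ i ∈ s, g i| ≤ L * ∑ i ∈ s, r i := by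
  rw [← Finset.sum_sub_distrib, Finset.mul_sum]
  exact (Finset.abs_sum_le_sum_abs _ _).trans (Finset.sum_le_sum h)

theorem abs_sum_mul_le {ι : Type*} (s : Finset ι) {w y : ι → ℝ} {M : ℝ}
    (hw : ∀ i ∈ s, 0 ≤ w i) (hy : ∀ i ∈ s, |y i| ≤ M) :
    |∑ i ∈ s, w i * y i| ≤ M * ∑ i ∈ s, w i := by
  rw [Finset.mul_sum]
  refine (Finset.abs_sum_le_sum_abs _ _).trans (Finset.sum_le_sum fun i hi => ?_)
  rw [abs_mul, abs_of_nonneg (hw i hi), mul_comm]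
  exact mul_le_mul_of_nonneg_right (hy i hi) (hw i hi)

theorem abs_div_sub_div_le {u v u' v' δ M : ℝ} (hδ : 0 < δ) (hv : δ ≤ v) (hv' : 0 < v')
    (hu' : |u' / v'| ≤ M) :
    |u / v - u' / v'| ≤ (|u - u'| + M * |v - v'|) / δ := by
  have hv0 : 0 < v := hδ.trans_le hv
  have hM : 0 ≤ M := (abs_nonneg _).trans hu'
  have key : u / v - u' / v' = (u - u' - u' / v' * (v - v')) / v := by
    field_simp
    ring
  rw [key, abs_div, abs_of_pos hv0]
  calc |u - u' - u' / v' * (v - v')| / v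
      ≤ (|u - u'| + M * |v - v'|) / v := by
        gcongr
        refine (abs_sub _ _).trans ?_
        rw [abs_mul]
        gcongr
    _ ≤ (|u - u'| + M * |v - v'|) / δ := by gcongr

section Forms

variable {d : ℕ}

theorem bilin_eq_inner (B : Matrix (Fin d) (Fin d) ℝ) (p X : Vec d) :
    bilin B p X = inner ℝ (Matrix.toEuclideanCLM (𝕜 := ℝ) B p) X := by
  simp [bilin, PiLp.inner_apply, Matrix.mulVec, dotProduct, mul_comm]

theorem rowMul_eq_inner (C p : Vec d) : rowMul C p = inner ℝ C p := by
  simp [rowMul, PiLp.inner_apply, mul_comm]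

theorem abs_bilin_le (B : Matrix (Fin d) (Fin d) ℝ) (p X : Vec d) :
    |bilin B p X| ≤ ‖Matrix.toEuclideanCLM (𝕜 := ℝ) B‖ * ‖p‖ * ‖X‖ := by
  rw [bilin_eq_inner]
  exact (abs_real_inner_le_norm _ _).trans (by gcongr; exact ContinuousLinearMap.le_opNorm _ _)

theorem bilin_sub_left (B : Matrix (Fin d) (Fin d) ℝ) (p p' X : Vec d) :
    bilin B p X - bilin B p' X = bilin B (p - p') X := by
  simp only [bilin_eq_inner, map_sub, inner_sub_left]

theorem abs_rowMul_le (C p : Vec d) : |rowMul C p| ≤ ‖C‖ * ‖p‖ := by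
  rw [rowMul_eq_inner]
  exact abs_real_inner_le_norm _ _

theorem rowMul_sub_right (C p p' : Vec d) : rowMul C p - rowMul C p' = rowMul C (p - p') := by
  simp only [rowMul_eq_inner, inner_sub_right]

end Forms

section Gate

variable {d : ℕ} (B : Matrix (Fin d) (Fin d) ℝ) (C : Vec d) {X p p' : Vec d} {b b' R K : ℝ}

theorem abs_bilin_add_le (hX : ‖X‖ ≤ R) (hb : |b| ≤ K) (hp : ‖p‖ ≤ K) :
    |bilin B p X + b| ≤ ‖Matrix.toEuclideanCLM (𝕜 := ℝ) B‖ * K * R + K := by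
  have hK : 0 ≤ K := (norm_nonneg p).trans hp
  calc |bilin B p X + b| ≤ ‖Matrix.toEuclideanCLM (𝕜 := ℝ) B‖ * ‖p‖ * ‖X‖ + |b| :=
        (abs_add_le _ _).trans (by gcongr; exact abs_bilin_le B p X)
    _ ≤ ‖Matrix.toEuclideanCLM (𝕜 := ℝ) B‖ * K * R + K := by gcongr

theorem abs_bilin_add_sub_bilin_add_le (hX : ‖X‖ ≤ R) :
    |(bilin B p X + b) - (bilin B p' X + b')| ≤
      (‖Matrix.toEuclideanCLM (𝕜 := ℝ) B‖ * R + 1) * (‖p - p'‖ + |b - b'|) := by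
  have hR : 0 ≤ R := (norm_nonneg X).trans hX
  have hβR : 0 ≤ ‖Matrix.toEuclideanCLM (𝕜 := ℝ) B‖ * R := by positivity
  rw [add_sub_add_comm, bilin_sub_left]
  calc |bilin B (p - p') X + (b - b')|
      ≤ ‖Matrix.toEuclideanCLM (𝕜 := ℝ) B‖ * ‖p - p'‖ * ‖X‖ + |b - b'| :=
        (abs_add_le _ _).trans (by gcongr; exact abs_bilin_le B _ X)
    _ ≤ ‖Matrix.toEuclideanCLM (𝕜 := ℝ) B‖ * R * ‖p - p'‖ + |b - b'| := by
        rw [mul_right_comm]; gcongr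
    _ ≤ (‖Matrix.toEuclideanCLM (𝕜 := ℝ) B‖ * R + 1) * (‖p - p'‖ + |b - b'|) := by
        nlinarith [mul_nonneg hβR (abs_nonneg (b - b')), norm_nonneg (p - p')]

theorem abs_exp_bilin_add_sub_le (hX : ‖X‖ ≤ R) (hb : |b| ≤ K) (hp : ‖p‖ ≤ K)
    (hb' : |b'| ≤ K) (hp' : ‖p'‖ ≤ K) :
    |exp (bilin B p X + b) - exp (bilin B p' X + b')| ≤
      exp (‖Matrix.toEuclideanCLM (𝕜 := ℝ) B‖ * K * R + K) *
        (‖Matrix.toEuclideanCLM (𝕜 := ℝ) B‖ * R + 1) * (‖p - p'‖ + |b - b'|) := by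
  rw [mul_assoc]
  refine (abs_exp_sub_exp_le (abs_le.1 (abs_bilin_add_le B hX hb hp)).2
    (abs_le.1 (abs_bilin_add_le B hX hb' hp')).2).trans ?_
  gcongr
  exact abs_bilin_add_sub_bilin_add_le B hX

theorem abs_exp_bilin_add_mul_rowMul_sub_le (hX : ‖X‖ ≤ R) (hb : |b| ≤ K) (hp : ‖p‖ ≤ K)
    (hb' : |b'| ≤ K) (hp' : ‖p'‖ ≤ K) :
    |exp (bilin B p X + b) * rowMul C p - exp (bilin B p' X + b') * rowMul C p'| ≤
      exp (‖Matrix.toEuclideanCLM (𝕜 := ℝ) B‖ * K * R + K) *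
        (‖Matrix.toEuclideanCLM (𝕜 := ℝ) B‖ * R + 1) * (‖C‖ * (K + 1)) *
          (‖p - p'‖ + |b - b'|) := by
  set M₀ := ‖Matrix.toEuclideanCLM (𝕜 := ℝ) B‖ * K * R + K
  set L := exp M₀ * (‖Matrix.toEuclideanCLM (𝕜 := ℝ) B‖ * R + 1)
  have hR : 0 ≤ R := (norm_nonneg X).trans hX
  have hM₀L : exp M₀ ≤ L :=
    le_mul_of_one_le_right (exp_pos _).le (le_add_of_nonneg_left (by positivity))
  have hexp' : |exp (bilin B p' X + b')| ≤ exp M₀ := by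
    rw [abs_exp]
    exact exp_le_exp.2 (abs_le.1 (abs_bilin_add_le B hX hb' hp')).2
  have hpp' : ‖p - p'‖ ≤ ‖p - p'‖ + |b - b'| := le_add_of_nonneg_right (abs_nonneg _)
  calc _ ≤ |exp (bilin B p X + b) - exp (bilin B p' X + b')| * |rowMul C p| +
        |exp (bilin B p' X + b')| * |rowMul C p - rowMul C p'| := abs_mul_sub_mul_le _ _ _ _
    _ ≤ L * (‖p - p'‖ + |b - b'|) * (‖C‖ * K) + L * (‖C‖ * (‖p - p'‖ + |b - b'|)) := by
        rw [rowMul_sub_right]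
        gcongr
        · exact abs_exp_bilin_add_sub_le B hX hb hp hb' hp'
        · exact (abs_rowMul_le C p).trans (by gcongr)
        · exact hexp'.trans hM₀L
        · exact (abs_rowMul_le C _).trans (by gcongr)
    _ = _ := by ring

theorem exp_neg_le_sum_exp_bilin_add {m : ℕ} (hm : 0 < m) {b : Fin m → ℝ} {p : Fin m → Vec d}
    (hX : ‖X‖ ≤ R) (hb : ∀ i, |b i| ≤ K) (hp : ∀ i, ‖p i‖ ≤ K) :
    exp (-(‖Matrix.toEuclideanCLM (𝕜 := ℝ) B‖ * K * R + K)) ≤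
      ∑ i, exp (bilin B (p i) X + b i) := by
  let i₀ : Fin m := ⟨0, hm⟩
  calc _ ≤ exp (bilin B (p i₀) X + b i₀) :=
        exp_le_exp.2 (neg_le_of_abs_le (abs_bilin_add_le B hX (hb i₀) (hp i₀)))
    _ ≤ ∑ i, exp (bilin B (p i) X + b i) :=
        Finset.single_le_sum (f := fun i => exp (bilin B (p i) X + b i))
          (fun i _ => (exp_pos _).le) (Finset.mem_univ i₀)

end Gate

section MoE

variable {d N : ℕ} (A : Fin N → Matrix (Fin d) (Fin d) ℝ) (a : Fin N → ℝ)
  (h : Fin N → Vec d → ℝ) (B : Matrix (Fin d) (Fin d) ℝ) (C : Vec d)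

theorem abs_moeLin_le {m : ℕ} (hm : 0 < m) {b : Fin m → ℝ} {p : Fin m → Vec d} {X : Vec d}
    {M : ℝ} (hh : ∀ j, |h j X| ≤ M) (hC : ∀ i, |rowMul C (p i)| ≤ M) :
    |moeLin A a h B C b p X| ≤ M := by
  have hS : 0 < ∑ i, exp (bilin B (p i) X + b i) :=
    Finset.sum_pos (fun i _ => exp_pos _) ⟨⟨0, hm⟩, Finset.mem_univ _⟩
  have hE : 0 ≤ ∑ j, exp (quadForm (A j) X + a j) :=
    Finset.sum_nonneg fun j _ => (exp_pos _).le
  have hD := add_pos_of_nonneg_of_pos hE hS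
  rw [moeLin, abs_div, abs_of_pos hD, div_le_iff₀ hD, mul_add]
  exact (abs_add_le _ _).trans (add_le_add
    (abs_sum_mul_le _ (fun j _ => (exp_pos _).le) fun j _ => hh j)
    (abs_sum_mul_le _ (fun i _ => (exp_pos _).le) fun i _ => hC i))

theorem abs_moeLin_sub_moeLin_le {m : ℕ} (hm : 0 < m) {b b' : Fin m → ℝ}
    {p p' : Fin m → Vec d} {X : Vec d} {R K M : ℝ} (hX : ‖X‖ ≤ R) (hh : ∀ j, |h j X| ≤ M)
    (hCK : ‖C‖ * K ≤ M) (hb : ∀ i, |b i| ≤ K) (hp : ∀ i, ‖p i‖ ≤ K)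
    (hb' : ∀ i, |b' i| ≤ K) (hp' : ∀ i, ‖p' i‖ ≤ K) :
    |moeLin A a h B C b p X - moeLin A a h B C b' p' X| ≤
      exp (‖Matrix.toEuclideanCLM (𝕜 := ℝ) B‖ * K * R + K) ^ 2 *
        (‖Matrix.toEuclideanCLM (𝕜 := ℝ) B‖ * R + 1) * (‖C‖ * (K + 1) + M) *
          ∑ i, (‖p i - p' i‖ + |b i - b' i|) := by
  set M₀ := ‖Matrix.toEuclideanCLM (𝕜 := ℝ) B‖ * K * R + K
  set L := exp M₀ * (‖Matrix.toEuclideanCLM (𝕜 := ℝ) B‖ * R + 1)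
  set Δ := ∑ i, (‖p i - p' i‖ + |b i - b' i|)
  have hf' : |moeLin A a h B C b' p' X| ≤ M := abs_moeLin_le A a h B C hm hh fun i =>
    (abs_rowMul_le C _).trans ((mul_le_mul_of_nonneg_left (hp' i) (norm_nonneg C)).trans hCK)
  have hM : 0 ≤ M := (abs_nonneg _).trans hf'
  have hS : |∑ i, exp (bilin B (p i) X + b i) - ∑ i, exp (bilin B (p' i) X + b' i)| ≤ L * Δ :=
    abs_sum_sub_sum_le _ fun i _ => abs_exp_bilin_add_sub_le B hX (hb i) (hp i) (hb' i) (hp' i)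
  have hT : |∑ i, exp (bilin B (p i) X + b i) * rowMul C (p i) -
      ∑ i, exp (bilin B (p' i) X + b' i) * rowMul C (p' i)| ≤ L * (‖C‖ * (K + 1)) * Δ :=
    abs_sum_sub_sum_le _ fun i _ =>
      abs_exp_bilin_add_mul_rowMul_sub_le B C hX (hb i) (hp i) (hb' i) (hp' i)
  have hE : 0 ≤ ∑ j, exp (quadForm (A j) X + a j) :=
    Finset.sum_nonneg fun j _ => (exp_pos _).le
  have hD := le_add_of_nonneg_of_le hE (exp_neg_le_sum_exp_bilin_add B hm hX hb hp)
  have hD' := add_pos_of_nonneg_of_pos hE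
    ((exp_pos _).trans_le (exp_neg_le_sum_exp_bilin_add B hm hX hb' hp'))
  refine (abs_div_sub_div_le (exp_pos (-M₀)) hD hD' hf').trans ?_
  rw [add_sub_add_left_eq_sub, add_sub_add_left_eq_sub]
  calc _ ≤ (L * (‖C‖ * (K + 1)) * Δ + M * (L * Δ)) / exp (-M₀) := by gcongr
    _ = _ := by rw [exp_neg, div_inv_eq_mul]; ring

end MoE

theorem moe_lipschitz_in_parameters_general
    (d N L' : ℕ)
    (Ω : Set (ℝ × Vec d)) (hΩ : IsCompact Ω)
    (A : Fin N → Matrix (Fin d) (Fin d) ℝ) (a : Fin N → ℝ)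
    (h : Fin N → Vec d → ℝ)
    (hbdd : ∀ j, ∃ M, ∀ X, |h j X| ≤ M)
    (B : Matrix (Fin d) (Fin d) ℝ) (C : Vec d)
    (μ : Measure (Vec d)) [IsProbabilityMeasure μ]
    (hsupp : ∃ R, ∀ᵐ X ∂μ, ‖X‖ ≤ R) :
    ∃ C₁ > (0 : ℝ),
      ∀ (b : Fin L' → ℝ) (p : Fin L' → Vec d) (b' : Fin L' → ℝ) (p' : Fin L' → Vec d),
        (∀ i, (b i, p i) ∈ Ω) → (∀ i, (b' i, p' i) ∈ Ω) →
        eLpNorm (fun X => moeLin A a h B C b p X - moeLin A a h B C b' p' X) 2 μ ≤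
          ENNReal.ofReal (C₁ * ∑ i, (‖p i - p' i‖ + |b i - b' i|)) := by
  obtain ⟨R, hR⟩ := hsupp
  obtain ⟨K, hK⟩ := hΩ.isBounded.exists_norm_le
  have hΩK (c : Fin L' → ℝ) (q : Fin L' → Vec d) (hcq : ∀ i, (c i, q i) ∈ Ω) :
      (∀ i, |c i| ≤ K) ∧ ∀ i, ‖q i‖ ≤ K :=
    ⟨fun i => (norm_fst_le _).trans (hK _ (hcq i)),
      fun i => (norm_snd_le _).trans (hK _ (hcq i))⟩
  choose Mh hMh using hbdd
  set M := max (∑ j, |Mh j|) (‖C‖ * K)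
  have hhM (j X) : |h j X| ≤ M := (hMh j X).trans <| (le_abs_self _).trans <|
    (Finset.single_le_sum (fun j _ => abs_nonneg (Mh j)) (Finset.mem_univ j)).trans
      (le_max_left _ _)
  set c := exp (‖Matrix.toEuclideanCLM (𝕜 := ℝ) B‖ * K * R + K) ^ 2 *
    (‖Matrix.toEuclideanCLM (𝕜 := ℝ) B‖ * R + 1) * (‖C‖ * (K + 1) + M)
  refine ⟨max c 1, by positivity, fun b p b' p' hbp hbp' => ?_⟩
  rcases Nat.eq_zero_or_pos L' with rfl | hL
  · obtain rfl := Subsingleton.elim b b'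
    obtain rfl := Subsingleton.elim p p'
    simp
  obtain ⟨hb, hp⟩ := hΩK b p hbp
  obtain ⟨hb', hp'⟩ := hΩK b' p' hbp'
  have hbound : ∀ᵐ X ∂μ, ‖moeLin A a h B C b p X - moeLin A a h B C b' p' X‖ ≤
      max c 1 * ∑ i, (‖p i - p' i‖ + |b i - b' i|) := hR.mono fun X hX => by
    refine (abs_moeLin_sub_moeLin_le A a h B C hL hX (hhM · X) (le_max_right _ _)
      hb hp hb' hp').trans ?_
    gcongr
    exact le_max_left _ _
  simpa using eLpNorm_le_of_ae_bound hbound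

theorem moe_lipschitz_in_parameters
    (d N L' : ℕ)
    (Ω : Set (ℝ × Vec d)) (hΩ : IsCompact Ω)
    (A : Fin N → Matrix (Fin d) (Fin d) ℝ) (a : Fin N → ℝ)
    (h : Fin N → Vec d → ℝ) (hmeas : ∀ j, Measurable (h j))
    (hbdd : ∀ j, ∃ M, ∀ X, |h j X| ≤ M)
    (B : Matrix (Fin d) (Fin d) ℝ) (C : Vec d)
    (μ : Measure (Vec d)) [IsProbabilityMeasure μ]
    (hsupp : ∃ R, ∀ᵐ X ∂μ, ‖X‖ ≤ R) :
    ∃ C₁ > (0 : ℝ),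
      ∀ (b : Fin L' → ℝ) (p : Fin L' → Vec d) (b' : Fin L' → ℝ) (p' : Fin L' → Vec d),
        (∀ i, (b i, p i) ∈ Ω) → (∀ i, (b' i, p' i) ∈ Ω) →
        eLpNorm (fun X => moeLin A a h B C b p X - moeLin A a h B C b' p' X) 2 μ ≤
          ENNReal.ofReal (C₁ * ∑ i, (‖p i - p' i‖ + |b i - b' i|)) :=
  moe_lipschitz_in_parameters_general d N L' Ω hΩ A a h hbdd B C μ hsupp

end
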